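/- arXiv:2112.06974 — 2 statements merged into one kernel-verified Lean document; each statement's English description precedes it below -/
import Mathlib

section
/- Fix n ≥ 2 and real coefficients c₀, c₁, …, c_n (the pressure coefficients c_{p,j} of the pipes), all nonzero, and suppose S := ∑_{j=1}^n ∏_{i=1, i≠j}^n c_i ≠ 0. Suppose real numbers p_{j,r}, q_{j,ℓ}, q_{j,r} (j = 1,…,n) and q_{0,ℓ} satisfy the pipe pressure dynamics ṗ_{j,r} = c_j (q_{j,r} − q_{j,ℓ}) together with the algebraic constraints p_{1,r} = p_{2,r} = ⋯ = p_{n,r} (hence all ṗ_{j,r} are equal) and ∑_{j=1}^n q_{j,r} = q_{0,ℓ}. Then for every k ∈ {1,…,n}: S · q_{k,r} = (∏_{i≠k} c_i) · (q_{0,ℓ} − ∑_{i≠k} q_{i,ℓ}) + (S − ∏_{i≠k} c_i) · q_{k,ℓ}. -/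
/-- Theorem 1: elimination of the internal variables `q_{k,r}` at an `n`-pipe joint. -/
theorem n_pipe_joint_elimination (n : ℕ) (hn : 2 ≤ n)
    (c qℓ qr : Fin n → ℝ) (q0ℓ d : ℝ)
    (hc : ∀ j, c j ≠ 0)
    (hS : (∑ j : Fin n, ∏ i ∈ Finset.univ.erase j, c i) ≠ 0)
    (hdyn : ∀ j, d = c j * (qr j - qℓ j))
    (hmass : (∑ j : Fin n, qr j) = q0ℓ) :
    ∀ k : Fin n,
      (∑ j : Fin n, ∏ i ∈ Finset.univ.erase j, c i) * qr k =
        (∏ i ∈ Finset.univ.erase k, c i) * (q0ℓ - ∑ i ∈ Finset.univ.erase k, qℓ i) +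
          ((∑ j : Fin n, ∏ i ∈ Finset.univ.erase j, c i) -
            ∏ i ∈ Finset.univ.erase k, c i) * qℓ k := by
  intro k
  set S := (∑ j : Fin n, ∏ i ∈ Finset.univ.erase j, c i) with hSdef
  have key : (∏ i : Fin n, c i) * (∑ j : Fin n, (qr j - qℓ j)) = S * d := by
    rw [Finset.mul_sum, hSdef, Finset.sum_mul]
    refine Finset.sum_congr rfl fun j _ => ?_
    have h1 : (∏ i : Fin n, c i) = c j * ∏ i ∈ Finset.univ.erase j, c i :=
      (Finset.mul_prod_erase _ _ (Finset.mem_univ j)).symm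
    rw [h1, hdyn j]
    ring
  have hprod : (∏ i : Fin n, c i) = c k * ∏ i ∈ Finset.univ.erase k, c i :=
    (Finset.mul_prod_erase _ _ (Finset.mem_univ k)).symm
  have key2 : (∏ i ∈ Finset.univ.erase k, c i) * (∑ j : Fin n, (qr j - qℓ j))
      = S * (qr k - qℓ k) := by
    have h := key
    rw [hprod, hdyn k] at h
    have := mul_left_cancel₀ (hc k) (by linarith [h] : c k *
      ((∏ i ∈ Finset.univ.erase k, c i) * ∑ j : Fin n, (qr j - qℓ j)) =
      c k * (S * (qr k - qℓ k)))
    exact this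
  have hsub : (∑ j : Fin n, (qr j - qℓ j)) = q0ℓ - ∑ j : Fin n, qℓ j := by
    rw [Finset.sum_sub_distrib, hmass]
  have herase : (∑ i ∈ Finset.univ.erase k, qℓ i) = (∑ j : Fin n, qℓ j) - qℓ k := by
    rw [Finset.sum_erase_eq_sub (Finset.mem_univ k)]
  rw [hsub] at key2
  rw [herase]
  linarith [key2]
end

section
/- (Star junction elimination.) Let n ≥ 2, m ≥ 1, and let c₁,…,c_n be nonzero reals with S := ∑_{j=1}^n ∏_{i≠j} c_i ≠ 0. Suppose reals d, q_{j,ℓ} (j = 1,…,n+m), q_{k,r} (k = 1,…,n) satisfy d = c_k (q_{k,r} − q_{k,ℓ}) for k = 1,…,n and ∑_{k=1}^n q_{k,r} = ∑_{i=n+1}^{n+m} q_{i,ℓ}. Then for every k ∈ {1,…,n}: S·q_{k,r} = (∏_{i≤n, i≠k} c_i)·(∑_{i=n+1}^{n+m} q_{i,ℓ} − ∑_{i≤n, i≠k} q_{i,ℓ}) + (S − ∏_{i≤n, i≠k} c_i)·q_{k,ℓ}. -/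
/-- Star-junction elimination (Corollary 3 of the paper). -/
theorem star_junction_elimination (n m : ℕ) (hn : 2 ≤ n) (hm : 1 ≤ m)
    (c : Fin n → ℝ) (qℓ : Fin (n + m) → ℝ) (qr : Fin n → ℝ) (d : ℝ)
    (hc : ∀ j, c j ≠ 0)
    (hS : (∑ j : Fin n, ∏ i ∈ Finset.univ.erase j, c i) ≠ 0)
    (hdyn : ∀ k : Fin n, d = c k * (qr k - qℓ (Fin.castAdd m k)))
    (hmass : (∑ k : Fin n, qr k) = ∑ i : Fin m, qℓ (Fin.natAdd n i)) :
    ∀ k : Fin n,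
      (∑ j : Fin n, ∏ i ∈ Finset.univ.erase j, c i) * qr k =
        (∏ i ∈ Finset.univ.erase k, c i) *
            ((∑ i : Fin m, qℓ (Fin.natAdd n i)) -
              ∑ i ∈ Finset.univ.erase k, qℓ (Fin.castAdd m i)) +
          ((∑ j : Fin n, ∏ i ∈ Finset.univ.erase j, c i) -
            ∏ i ∈ Finset.univ.erase k, c i) * qℓ (Fin.castAdd m k) := by
  intro k
  set S := ∑ j : Fin n, ∏ i ∈ Finset.univ.erase j, c i with hSdef
  set C := ∏ i : Fin n, c i with hCdef
  have hP : ∀ j : Fin n, c j * ∏ i ∈ Finset.univ.erase j, c i = C := fun j =>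
    Finset.mul_prod_erase _ _ (Finset.mem_univ j)
  have hSd : S * d = C * ((∑ i : Fin m, qℓ (Fin.natAdd n i)) -
      ∑ j : Fin n, qℓ (Fin.castAdd m j)) := by
    have h1 : S * d = ∑ j : Fin n, (∏ i ∈ Finset.univ.erase j, c i) * d := by
      rw [hSdef, Finset.sum_mul]
    have h2 : ∀ j ∈ (Finset.univ : Finset (Fin n)),
        (∏ i ∈ Finset.univ.erase j, c i) * d
          = C * (qr j - qℓ (Fin.castAdd m j)) := by
      intro j _
      rw [hdyn j, ← hP j]; ring
    rw [h1, Finset.sum_congr rfl h2, ← Finset.mul_sum, Finset.sum_sub_distrib, hmass]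
  have hkey : c k * (S * (qr k - qℓ (Fin.castAdd m k))) =
      c k * ((∏ i ∈ Finset.univ.erase k, c i) *
        ((∑ i : Fin m, qℓ (Fin.natAdd n i)) - ∑ j : Fin n, qℓ (Fin.castAdd m j))) := by
    calc c k * (S * (qr k - qℓ (Fin.castAdd m k)))
        = S * (c k * (qr k - qℓ (Fin.castAdd m k))) := by ring
      _ = S * d := by rw [← hdyn k]
      _ = C * ((∑ i : Fin m, qℓ (Fin.natAdd n i)) -
            ∑ j : Fin n, qℓ (Fin.castAdd m j)) := hSd
      _ = _ := by rw [← hP k]; ring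
  have hkey2 := mul_left_cancel₀ (hc k) hkey
  have herase : ∑ j : Fin n, qℓ (Fin.castAdd m j) =
      qℓ (Fin.castAdd m k) + ∑ i ∈ Finset.univ.erase k, qℓ (Fin.castAdd m i) :=
    (Finset.add_sum_erase _ _ (Finset.mem_univ k)).symm
  rw [herase] at hkey2
  linear_combination hkey2
end
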